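/- For every n ≥ 2 and every p with 2 ≤ p ≤ n, the graph G = K_{p-1} + \overline{K_{n-p+1}} (the join of the complete graph on p-1 vertices with the empty graph on n-p+1 vertices) has local distance antimagic chromatic number χ_ld(G) = p. -/

import Mathlib

open Finset

open Classical in
/-- The weight of a vertex: sum of labels of its neighbors. -/
noncomputable def ldWeight {V : Type*} (G : SimpleGraph V) [Fintype V] (f : V → ℕ) (v : V) : ℕ :=
  ∑ x ∈ Finset.univ, if G.Adj v x then f x else 0

/-- `f` is a local distance antimagic labeling of `G`: a bijection onto `{1,…,|V|}`
with adjacent vertices getting distinct weights. -/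
def IsLDAL {V : Type*} (G : SimpleGraph V) [Fintype V] (f : V → ℕ) : Prop :=
  Set.BijOn f Set.univ (Set.Icc 1 (Fintype.card V)) ∧
    ∀ ⦃u v : V⦄, G.Adj u v → ldWeight G f u ≠ ldWeight G f v

/-- The local distance antimagic chromatic number: minimum number of distinct weights. -/
noncomputable def chiLD {V : Type*} (G : SimpleGraph V) [Fintype V] : ℕ :=
  sInf {k | ∃ f : V → ℕ, IsLDAL G f ∧ (Finset.univ.image (ldWeight G f)).card = k}

/-- The join `G + H` of two graphs. -/
def graphJoin {α β : Type*} (G : SimpleGraph α) (H : SimpleGraph β) :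
    SimpleGraph (α ⊕ β) where
  Adj x y :=
    match x, y with
    | Sum.inl a, Sum.inl b => G.Adj a b
    | Sum.inr a, Sum.inr b => H.Adj a b
    | Sum.inl _, Sum.inr _ => True
    | Sum.inr _, Sum.inl _ => True
  symm := ⟨by
    rintro (a | a) (b | b) h
    exacts [h.symm, trivial, trivial, h.symm]⟩
  loopless := ⟨by
    rintro (a | a) h
    exacts [h.ne rfl, h.ne rfl]⟩

/-- The lexicographic product `G[H]`. -/
def lexProd {α β : Type*} (G : SimpleGraph α) (H : SimpleGraph β) :
    SimpleGraph (α × β) where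
  Adj x y := G.Adj x.1 y.1 ∨ (x.1 = y.1 ∧ H.Adj x.2 y.2)
  symm := ⟨by
    rintro x y (h | ⟨e, h⟩)
    exacts [Or.inl h.symm, Or.inr ⟨e.symm, h.symm⟩]⟩
  loopless := ⟨by
    rintro x (h | ⟨e, h⟩)
    exacts [h.ne rfl, h.ne rfl]⟩

/-- The friendship graph `F_n`: `n` triangles sharing the central vertex `none`. -/
def friendship (n : ℕ) : SimpleGraph (Option (Fin n × Fin 2)) where
  Adj x y := x ≠ y ∧ (x = none ∨ y = none ∨ ∃ i a b, x = some (i, a) ∧ y = some (i, b))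
  symm := ⟨by
    rintro x y ⟨hne, h⟩
    refine ⟨hne.symm, ?_⟩
    rcases h with h | h | ⟨i, a, b, hx, hy⟩
    · exact Or.inr (Or.inl h)
    · exact Or.inl h
    · exact Or.inr (Or.inr ⟨i, b, a, hy, hx⟩)⟩
  loopless := ⟨fun x h => h.1 rfl⟩

/-- The bistar `B_{n,n}`: two adjacent centers, each with `n` leaves. -/
def bistar (n : ℕ) : SimpleGraph (Bool ⊕ Bool × Fin n) where
  Adj x y :=
    match x, y with
    | Sum.inl a, Sum.inl b => a ≠ b
    | Sum.inl a, Sum.inr (c, _) => a = c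
    | Sum.inr (c, _), Sum.inl a => a = c
    | Sum.inr _, Sum.inr _ => False
  symm := ⟨by
    rintro (a | ⟨c, i⟩) (b | ⟨d, j⟩) h
    exacts [h.symm, h, h, h.elim]⟩
  loopless := ⟨by
    rintro (a | ⟨c, i⟩) h
    exacts [h rfl, h]⟩

/-! In `K_q + \overline{K_m}` a clique vertex `v` is adjacent to every vertex but itself, so its
weight is `S - f v` with `S` the total label sum: clique weights are pairwise distinct. Every
independent vertex has weight `∑_{clique} f`, which differs from all clique weights since they are
adjacent. So when `m > 0` every local distance antimagic labeling has exactly `q + 1` weights, and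
one exists: give the clique the labels `1, …, q`, so that no clique label equals the sum of the
independent labels. -/

theorem Set.bijOn_val_add_one_of_equiv {V : Type*} {k : ℕ} (e : V ≃ Fin k) :
    Set.BijOn (fun v => (e v : ℕ) + 1) Set.univ (Set.Icc 1 k) := by
  refine ⟨fun v _ => ⟨Nat.le_add_left _ _, (e v).is_lt⟩,
    fun v _ w _ h => e.injective (Fin.ext (Nat.succ_injective h)),
    fun i ⟨hi₁, hi₂⟩ => ⟨e.symm ⟨i - 1, by omega⟩, Set.mem_univ _, ?_⟩⟩
  simp only [Equiv.apply_symm_apply]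
  omega

section CompleteJoinEmpty

variable {α β : Type*} [Fintype α] [Fintype β]

abbrev completeJoinEmpty (α β : Type*) : SimpleGraph (α ⊕ β) :=
  graphJoin (⊤ : SimpleGraph α) (⊥ : SimpleGraph β)

lemma ldWeight_inl_add (f : α ⊕ β → ℕ) (a : α) :
    ldWeight (completeJoinEmpty α β) f (Sum.inl a) + f (Sum.inl a) = ∑ x, f x := by
  classical
  have hadj : ∀ x, (completeJoinEmpty α β).Adj (Sum.inl a) x ↔ x ≠ Sum.inl a := by
    rintro (b | b)
    · simp [graphJoin, eq_comm]
    · simp [graphJoin]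
  rw [ldWeight, sum_congr rfl fun x _ => if_congr (hadj x) rfl rfl, ← sum_filter,
    filter_ne', sum_erase_add _ _ (mem_univ _)]

lemma ldWeight_inr (f : α ⊕ β → ℕ) (b : β) :
    ldWeight (completeJoinEmpty α β) f (Sum.inr b) = ∑ a, f (Sum.inl a) := by
  simp [ldWeight, Fintype.sum_sum_type, graphJoin]

lemma image_ldWeight_eq_insert (f : α ⊕ β → ℕ) (b : β) :
    univ.image (ldWeight (completeJoinEmpty α β) f) =
      insert (ldWeight (completeJoinEmpty α β) f (Sum.inr b))
        (univ.image fun a => ldWeight (completeJoinEmpty α β) f (Sum.inl a)) := by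
  ext w
  simp only [mem_image, mem_univ, true_and, mem_insert, Sum.exists, ldWeight_inr]
  constructor
  · rintro (⟨a, rfl⟩ | ⟨_, rfl⟩) <;> simp
  · rintro (rfl | ⟨a, rfl⟩)
    exacts [Or.inr ⟨b, rfl⟩, Or.inl ⟨a, rfl⟩]

lemma card_image_ldWeight_of_isLDAL [Nonempty β] {f : α ⊕ β → ℕ}
    (hf : IsLDAL (completeJoinEmpty α β) f) :
    (univ.image (ldWeight (completeJoinEmpty α β) f)).card = Fintype.card α + 1 := by
  obtain ⟨b⟩ := ‹Nonempty β›
  have hinj : Function.Injective fun a => ldWeight (completeJoinEmpty α β) f (Sum.inl a) := by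
    intro a a' (h : ldWeight _ f _ = ldWeight _ f _)
    have := ldWeight_inl_add f a
    have := ldWeight_inl_add f a'
    exact Sum.inl_injective (hf.1.injOn (Set.mem_univ _) (Set.mem_univ _) (by omega))
  have hnotMem : ldWeight (completeJoinEmpty α β) f (Sum.inr b) ∉
      univ.image fun a => ldWeight (completeJoinEmpty α β) f (Sum.inl a) := by
    simp only [mem_image, mem_univ, true_and, not_exists]
    exact fun a => hf.2 (show (completeJoinEmpty α β).Adj (Sum.inl a) (Sum.inr b) from trivial)
  rw [image_ldWeight_eq_insert f b, card_insert_of_notMem hnotMem,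
    card_image_of_injective _ hinj, card_univ]

lemma isLDAL_of_ne_sum_inr {f : α ⊕ β → ℕ}
    (hbij : Set.BijOn f Set.univ (Set.Icc 1 (Fintype.card (α ⊕ β))))
    (hne : ∀ a, f (Sum.inl a) ≠ ∑ b, f (Sum.inr b)) :
    IsLDAL (completeJoinEmpty α β) f := by
  refine ⟨hbij, ?_⟩
  rintro (a | b) (a' | b') hadj heq
  · have := ldWeight_inl_add f a
    have := ldWeight_inl_add f a'
    exact hadj (Sum.inl_injective (hbij.injOn (Set.mem_univ _) (Set.mem_univ _) (by omega)))
  · have := ldWeight_inl_add f a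
    rw [heq, ldWeight_inr, Fintype.sum_sum_type] at this
    exact hne a (by omega)
  · have := ldWeight_inl_add f a'
    rw [← heq, ldWeight_inr, Fintype.sum_sum_type] at this
    exact hne a' (by omega)
  · exact hadj.elim

lemma exists_isLDAL [Nonempty β] : ∃ f, IsLDAL (completeJoinEmpty α β) f := by
  obtain ⟨b₀⟩ := ‹Nonempty β›
  let e := (Equiv.sumCongr (Fintype.equivFin α) (Fintype.equivFin β)).trans finSumFinEquiv
  refine ⟨fun x => (e x : ℕ) + 1, isLDAL_of_ne_sum_inr ?_ fun a => ?_⟩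
  · rw [Fintype.card_sum]
    exact Set.bijOn_val_add_one_of_equiv e
  · have hle : (e (Sum.inl a) : ℕ) + 1 ≤ Fintype.card α := by
      simp [e, Fin.is_lt]
    have hlt : Fintype.card α < (e (Sum.inr b₀) : ℕ) + 1 := by
      simp [e]
    have := single_le_sum (fun b _ => Nat.zero_le ((e (Sum.inr b) : ℕ) + 1)) (mem_univ b₀)
    omega

theorem chiLD_completeJoinEmpty [Nonempty β] :
    chiLD (completeJoinEmpty α β) = Fintype.card α + 1 := by
  suffices h : {k | ∃ f, IsLDAL (completeJoinEmpty α β) f ∧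
      (univ.image (ldWeight (completeJoinEmpty α β) f)).card = k} = {Fintype.card α + 1} by
    rw [chiLD, h, csInf_singleton]
  ext k
  constructor
  · rintro ⟨f, hf, rfl⟩
    exact card_image_ldWeight_of_isLDAL hf
  · rintro rfl
    obtain ⟨f, hf⟩ := exists_isLDAL (α := α) (β := β)
    exact ⟨f, hf, card_image_ldWeight_of_isLDAL hf⟩

end CompleteJoinEmpty

theorem stmt_2_general (n p : ℕ) (hp : 2 ≤ p) :
    chiLD (graphJoin (⊤ : SimpleGraph (Fin (p - 1)))
      (⊥ : SimpleGraph (Fin (n - p + 1)))) = p := by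
  rw [chiLD_completeJoinEmpty, Fintype.card_fin]
  omega

theorem stmt_2 (n p : ℕ) (hp : 2 ≤ p) (hpn : p ≤ n) :
    chiLD (graphJoin (⊤ : SimpleGraph (Fin (p - 1)))
      (⊥ : SimpleGraph (Fin (n - p + 1)))) = p :=
  stmt_2_general n p hp
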